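/- Let $g_n(z) = L_n z + p_n(z)$ be a sequence of special triangular automorphisms of $\mathbb{C}^d$ satisfying: (a) $\|L_{n,m}\| \le c\lambda^{n-m}$ for all $n\ge m$ with $0<\lambda<1$; (b) $(p_n)$ is a bounded sequence of strictly triangular polynomials with vanishing 1-jet at 0. Then there exist $C>0$ and $k\in\mathbb{N}$ such that $|g_{n,0}(z)| \le C\lambda^n(|z| + |z|^k)$ for all $z\in\mathbb{C}^d$ and $n\in\mathbb{N}$. Consequently, the basin of attraction $\{z\in\mathbb{C}^d : g_{n,0}(z)\to 0\}$ is all of $\mathbb{C}^d$. -/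

import Mathlib

/-- The operator norm of a `d × d` complex matrix acting on `ℂ^d` with the max-norm. -/
noncomputable def opN {d : ℕ} (M : Matrix (Fin d) (Fin d) ℂ) : ℝ :=
  ‖LinearMap.toContinuousLinearMap (Matrix.mulVecLin M)‖

/-- `Lprod L m ℓ = L_{m+ℓ-1} ⋯ L_m`, i.e. the transition matrix `L_{m+ℓ, m}`. -/
noncomputable def Lprod {d : ℕ} (L : ℕ → Matrix (Fin d) (Fin d) ℂ) (m : ℕ) :
    ℕ → Matrix (Fin d) (Fin d) ℂ
  | 0 => 1
  | (ℓ + 1) => L (m + ℓ) * Lprod L m ℓ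

/-- The polynomial map representing the composition `g_{n,0} = g_{n-1} ∘ ⋯ ∘ g_0`,
where `g_n` is given by the tuple of polynomials `G n`. -/
noncomputable def compSeq {d : ℕ} (G : ℕ → Fin d → MvPolynomial (Fin d) ℂ) :
    ℕ → Fin d → MvPolynomial (Fin d) ℂ
  | 0 => fun j => MvPolynomial.X j
  | (n + 1) => fun j => MvPolynomial.bind₁ (compSeq G n) (G n j)

/-!
Write `F_n = g_{n,0}(z)`, so that `F_{n+1} = L_n F_n + p_n(F_n)` and, by variation of constants,
`F_n = L_{n,0} z + ∑_{m<n} L_{n,m+1} p_m(F_m)`. The coordinates of `F_n` are bounded one at a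
time. The component `p_m^j` only involves the coordinates `i < j`, which are already known to be
`O(λ^m)` with a polynomial dependence on `|z|`; since `p_m^j` has no terms of degree `< 2` and
bounded degree and coefficients, `p_m^j(F_m) = O(λ^{2m})`. As `L_{n,m+1}` is lower triangular with
norm `≤ c λ^{n-m-1}`, the sum is then `O(λ^n)`.
-/

open MvPolynomial Matrix Finset OrderDual

/-- Comparable to `t + t ^ (k + 1)`, but better behaved under powers (`weight_pow_le`). -/
def weight (k : ℕ) (t : ℝ) : ℝ := t * max 1 t ^ k

section Weight

variable {k : ℕ} {t : ℝ}

lemma weight_nonneg (ht : 0 ≤ t) : 0 ≤ weight k t := by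
  unfold weight; positivity

lemma le_weight (ht : 0 ≤ t) : t ≤ weight k t :=
  le_mul_of_one_le_right ht (one_le_pow₀ (le_max_left 1 t))

lemma weight_mono {k' : ℕ} (ht : 0 ≤ t) (hk : k ≤ k') : weight k t ≤ weight k' t :=
  mul_le_mul_of_nonneg_left (pow_le_pow_right₀ (le_max_left 1 t) hk) ht

lemma weight_le_add_pow (ht : 0 ≤ t) : weight k t ≤ t + t ^ (k + 1) := by
  rcases le_total t 1 with h | h
  · simp only [weight, max_eq_left h, one_pow, mul_one]
    linarith [pow_nonneg ht (k + 1)]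
  · simp only [weight, max_eq_right h, ← pow_succ']
    linarith

lemma weight_pow_le (ht : 0 ≤ t) {a : ℕ} (ha : 1 ≤ a) :
    weight k t ^ a ≤ weight (a * (k + 1)) t := by
  obtain ⟨b, rfl⟩ := Nat.exists_eq_add_of_le' ha
  have hmax : 1 ≤ max 1 t := le_max_left 1 t
  calc weight k t ^ (b + 1) = t * t ^ b * max 1 t ^ (k * (b + 1)) := by
        rw [weight, mul_pow, ← pow_mul, pow_succ']
    _ ≤ t * max 1 t ^ b * max 1 t ^ (k * (b + 1)) := by
        gcongr; exact le_max_right 1 t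
    _ = t * max 1 t ^ (b + k * (b + 1)) := by rw [mul_assoc, ← pow_add]
    _ ≤ weight ((b + 1) * (k + 1)) t :=
        mul_le_mul_of_nonneg_left (pow_le_pow_right₀ hmax (by nlinarith)) ht

lemma pow_mul_weight_le {C μ : ℝ} {a D : ℕ} (hC : 1 ≤ C) (hμ0 : 0 ≤ μ) (hμ1 : μ ≤ 1)
    (ht : 0 ≤ t) (ha : 2 ≤ a) (haD : a ≤ D) :
    (C * μ * weight k t) ^ a ≤ C ^ D * μ ^ 2 * weight (D * (k + 1)) t := by
  have hw := weight_nonneg (k := k) ht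
  rw [mul_pow, mul_pow]
  refine mul_le_mul (mul_le_mul ?_ ?_ (by positivity) (by positivity)) ?_ (by positivity)
    (by positivity)
  · exact pow_le_pow_right₀ hC haD
  · exact pow_le_pow_of_le_one hμ0 hμ1 ha
  · exact (weight_pow_le ht (by omega)).trans (weight_mono ht (by gcongr))

end Weight

section Matrices

variable {d : ℕ}

lemma opN_nonneg (M : Matrix (Fin d) (Fin d) ℂ) : 0 ≤ opN M := norm_nonneg _

lemma norm_mulVec_le_opN (M : Matrix (Fin d) (Fin d) ℂ) (v : Fin d → ℂ) :
    ‖M *ᵥ v‖ ≤ opN M * ‖v‖ :=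
  (LinearMap.toContinuousLinearMap (mulVecLin M)).le_opNorm v

lemma norm_apply_le_opN (M : Matrix (Fin d) (Fin d) ℂ) (i j : Fin d) : ‖M i j‖ ≤ opN M :=
  calc ‖M i j‖ ≤ ‖M *ᵥ Pi.single j 1‖ := by
        simpa [mulVec_single] using norm_le_pi_norm (M *ᵥ Pi.single j 1) i
    _ ≤ opN M := by simpa [Pi.norm_single] using norm_mulVec_le_opN M (Pi.single j 1)

variable (L : ℕ → Matrix (Fin d) (Fin d) ℂ)

lemma Lprod_blockTriangular {α : Type*} [LinearOrder α] {b : Fin d → α}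
    (hL : ∀ n, (L n).BlockTriangular b) (m : ℕ) : ∀ ℓ, (Lprod L m ℓ).BlockTriangular b
  | 0 => blockTriangular_one
  | ℓ + 1 => (hL (m + ℓ)).mul (Lprod_blockTriangular hL m ℓ)

lemma mul_Lprod {m n : ℕ} (h : m ≤ n) : L n * Lprod L m (n - m) = Lprod L m (n + 1 - m) := by
  obtain ⟨ℓ, rfl⟩ := Nat.exists_eq_add_of_le h
  rw [Nat.add_sub_cancel_left, show m + ℓ + 1 - m = ℓ + 1 by omega]
  rfl

lemma eq_Lprod_mulVec_add_sum (F Q : ℕ → Fin d → ℂ) (hrec : ∀ n, F (n + 1) = L n *ᵥ F n + Q n)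
    (n : ℕ) :
    F n = Lprod L 0 n *ᵥ F 0 + ∑ m ∈ range n, Lprod L (m + 1) (n - (m + 1)) *ᵥ Q m := by
  induction n with
  | zero => simp [Lprod]
  | succ n ih =>
    have hsum : ∀ m ∈ range n, L n *ᵥ (Lprod L (m + 1) (n - (m + 1)) *ᵥ Q m)
        = Lprod L (m + 1) (n + 1 - (m + 1)) *ᵥ Q m := fun m hm => by
      rw [mulVec_mulVec, mul_Lprod L (mem_range.1 hm)]
    rw [hrec, ih, mulVec_add, mulVec_sum, sum_congr rfl hsum, mulVec_mulVec, sum_range_succ]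
    simp [Lprod, add_assoc]

end Matrices

lemma norm_mulVec_apply_le_of_lowerTriangular {ι : Type*} [Fintype ι] [LinearOrder ι]
    {M : Matrix ι ι ℂ} (hM : M.BlockTriangular toDual) {v : ι → ℂ} {a b : ℝ} (i : ι)
    (hMa : ∀ j, ‖M i j‖ ≤ a) (hv : ∀ j ≤ i, ‖v j‖ ≤ b) :
    ‖(M *ᵥ v) i‖ ≤ Fintype.card ι * (a * b) := by
  have ha : 0 ≤ a := (norm_nonneg _).trans (hMa i)
  have hb : 0 ≤ b := (norm_nonneg _).trans (hv i le_rfl)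
  calc ‖(M *ᵥ v) i‖ ≤ ∑ j, ‖M i j * v j‖ := norm_sum_le _ _
    _ ≤ ∑ _j : ι, a * b := sum_le_sum fun j _ => by
        rcases le_or_gt j i with hji | hij
        · rw [norm_mul]; exact mul_le_mul (hMa j) (hv j hji) (norm_nonneg _) ha
        · rw [hM hij, zero_mul, norm_zero]; positivity
    _ = Fintype.card ι * (a * b) := by rw [sum_const, card_univ, nsmul_eq_mul]

lemma sum_pow_sub_mul_pow_two_mul_le {lam : ℝ} (h0 : 0 < lam) (h1 : lam < 1) (n : ℕ) :
    ∑ m ∈ range n, lam ^ (n - (m + 1)) * lam ^ (2 * m) ≤ lam ^ n / (lam * (1 - lam)) := by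
  have hterm : ∀ m ∈ range n, lam ^ (n - (m + 1)) * lam ^ (2 * m) = lam ^ n / lam * lam ^ m := by
    intro m hm
    have hexp : n - (m + 1) + 2 * m + 1 = n + m := by have := mem_range.1 hm; omega
    rw [div_mul_eq_mul_div, eq_div_iff h0.ne', ← pow_add, ← pow_succ, hexp, pow_add]
  rw [sum_congr rfl hterm, ← mul_sum]
  calc lam ^ n / lam * ∑ m ∈ range n, lam ^ m ≤ lam ^ n / lam * (1 - lam)⁻¹ :=
        mul_le_mul_of_nonneg_left
          (by rw [range_eq_Ico]; simpa using geom_sum_Ico_le_of_lt_one (m := 0) h0.le h1)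
          (by positivity)
    _ = lam ^ n / (lam * (1 - lam)) := by rw [← div_eq_mul_inv, div_div]

lemma norm_apply_le_of_forcing {d : ℕ} {L : ℕ → Matrix (Fin d) (Fin d) ℂ} {c lam A K : ℝ}
    (hlam0 : 0 < lam) (hlam1 : lam < 1) (hL : ∀ n, (L n).BlockTriangular toDual)
    (hLnorm : ∀ m ℓ : ℕ, opN (Lprod L m ℓ) ≤ c * lam ^ ℓ) {F Q : ℕ → Fin d → ℂ}
    (hrec : ∀ n, F (n + 1) = L n *ᵥ F n + Q n) {i : Fin d} (hF0 : ‖F 0‖ ≤ A)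
    (hQ : ∀ m, ∀ j ≤ i, ‖Q m j‖ ≤ K * lam ^ (2 * m)) (n : ℕ) :
    ‖F n i‖ ≤ (c * A + d * c * K / (lam * (1 - lam))) * lam ^ n := by
  have hc : 0 ≤ c := by simpa using (opN_nonneg _).trans (hLnorm 0 0)
  have hK : 0 ≤ K := by simpa using (norm_nonneg _).trans (hQ 0 i le_rfl)
  have hfree : ‖(Lprod L 0 n *ᵥ F 0) i‖ ≤ c * A * lam ^ n :=
    calc ‖(Lprod L 0 n *ᵥ F 0) i‖ ≤ opN (Lprod L 0 n) * ‖F 0‖ :=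
          (norm_le_pi_norm _ i).trans (norm_mulVec_le_opN _ _)
      _ ≤ c * lam ^ n * A := by gcongr; exact hLnorm 0 n
      _ = c * A * lam ^ n := by ring
  have hforced : ∀ m ∈ range n, ‖(Lprod L (m + 1) (n - (m + 1)) *ᵥ Q m) i‖
      ≤ d * c * K * (lam ^ (n - (m + 1)) * lam ^ (2 * m)) := fun m _ => by
    refine (norm_mulVec_apply_le_of_lowerTriangular (Lprod_blockTriangular L hL _ _) i
      (fun j => (norm_apply_le_opN _ i j).trans (hLnorm _ _)) (hQ m)).trans_eq ?_
    rw [Fintype.card_fin]; ring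
  rw [eq_Lprod_mulVec_add_sum L F Q hrec n, Pi.add_apply, Finset.sum_apply]
  calc _ ≤ ‖(Lprod L 0 n *ᵥ F 0) i‖ + ∑ m ∈ range n, ‖(Lprod L (m + 1) (n - (m + 1)) *ᵥ Q m) i‖ :=
        (norm_add_le _ _).trans (add_le_add le_rfl (norm_sum_le _ _))
    _ ≤ c * A * lam ^ n + d * c * K * ∑ m ∈ range n, lam ^ (n - (m + 1)) * lam ^ (2 * m) := by
        rw [mul_sum]; exact add_le_add hfree (sum_le_sum hforced)
    _ ≤ c * A * lam ^ n + d * c * K * (lam ^ n / (lam * (1 - lam))) := by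
        gcongr; exact sum_pow_sub_mul_pow_two_mul_le hlam0 hlam1 n
    _ = (c * A + d * c * K / (lam * (1 - lam))) * lam ^ n := by ring

section Polynomials

variable {σ 𝕜 : Type*} [NormedField 𝕜]

lemma card_support_le_of_totalDegree_le [Fintype σ] {q : MvPolynomial σ 𝕜} {D : ℕ}
    (h : q.totalDegree ≤ D) : #q.support ≤ (D + 1) ^ Fintype.card σ := by
  classical
  calc #q.support ≤ #(Fintype.piFinset fun _ : σ => range (D + 1)) := by
        refine card_le_card_of_injOn (fun m => ⇑m) (fun m hm => ?_) DFunLike.coe_injective.injOn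
        refine Fintype.mem_piFinset.2 fun i => ?_
        exact mem_range.2 (Nat.lt_succ_of_le
          ((Finsupp.le_degree i m).trans ((le_totalDegree hm).trans h)))
    _ = (D + 1) ^ Fintype.card σ := by simp

lemma norm_prod_pow_le (m : σ →₀ ℕ) (w : σ → 𝕜) {r : ℝ} (hw : ∀ i ∈ m.support, ‖w i‖ ≤ r) :
    ‖∏ i ∈ m.support, w i ^ m i‖ ≤ r ^ (m.sum fun _ e => e) := by
  rw [norm_prod, Finsupp.sum, ← prod_pow_eq_pow_sum]
  exact prod_le_prod (fun _ _ => norm_nonneg _) fun i hi => by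
    rw [norm_pow]; exact pow_le_pow_left₀ (norm_nonneg _) (hw i hi) _

lemma norm_eval_le_card_support_mul (q : MvPolynomial σ 𝕜) (w : σ → 𝕜) {B : ℝ}
    (h : ∀ m ∈ q.support, ‖coeff m q‖ * ‖∏ i ∈ m.support, w i ^ m i‖ ≤ B) :
    ‖eval w q‖ ≤ #q.support * B := by
  rw [eval_eq, ← nsmul_eq_mul]
  exact (norm_sum_le _ _).trans
    (sum_le_card_nsmul _ _ _ fun m hm => (norm_mul_le _ _).trans (h m hm))

lemma norm_eval_le_of_strictlyTriangular [Fintype σ] [LinearOrder σ] {q : MvPolynomial σ 𝕜}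
    {j : σ} {D k : ℕ} {M C μ t : ℝ}
    (hq : ∀ m ∈ q.support, (∀ i, j ≤ i → m i = 0) ∧ 2 ≤ m.sum fun _ e => e)
    (hdeg : q.totalDegree ≤ D) (hcoeff : ∀ m, ‖coeff m q‖ ≤ M) (hC : 1 ≤ C) (hμ0 : 0 ≤ μ)
    (hμ1 : μ ≤ 1) (ht : 0 ≤ t) {w : σ → 𝕜} (hw : ∀ i < j, ‖w i‖ ≤ C * μ * weight k t) :
    ‖eval w q‖ ≤ (D + 1) ^ Fintype.card σ * M * C ^ D * μ ^ 2 * weight (D * (k + 1)) t := by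
  have hM : 0 ≤ M := (norm_nonneg _).trans (hcoeff 0)
  have hB : 0 ≤ C ^ D * μ ^ 2 * weight (D * (k + 1)) t := by
    have := weight_nonneg (k := D * (k + 1)) ht; positivity
  have hmonomial : ∀ m ∈ q.support, ‖coeff m q‖ * ‖∏ i ∈ m.support, w i ^ m i‖
      ≤ M * (C ^ D * μ ^ 2 * weight (D * (k + 1)) t) := by
    intro m hm
    obtain ⟨hvars, hdeg2⟩ := hq m hm
    have hw' : ∀ i ∈ m.support, ‖w i‖ ≤ C * μ * weight k t := fun i hi =>
      hw i (lt_of_not_ge fun hji => Finsupp.mem_support_iff.1 hi (hvars i hji))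
    exact mul_le_mul (hcoeff m) ((norm_prod_pow_le m w hw').trans
      (pow_mul_weight_le hC hμ0 hμ1 ht hdeg2 ((le_totalDegree hm).trans hdeg)))
      (norm_nonneg _) hM
  calc ‖eval w q‖ ≤ #q.support * (M * (C ^ D * μ ^ 2 * weight (D * (k + 1)) t)) :=
        norm_eval_le_card_support_mul q w hmonomial
    _ ≤ (D + 1) ^ Fintype.card σ * (M * (C ^ D * μ ^ 2 * weight (D * (k + 1)) t)) := by
        gcongr; exact_mod_cast card_support_le_of_totalDegree_le hdeg
    _ = _ := by ring

end Polynomials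

section Orbit

variable {d : ℕ}

noncomputable def orbit (G : ℕ → Fin d → MvPolynomial (Fin d) ℂ) (z : Fin d → ℂ) (n : ℕ) :
    Fin d → ℂ := fun j => eval z (compSeq G n j)

lemma orbit_zero (G : ℕ → Fin d → MvPolynomial (Fin d) ℂ) (z : Fin d → ℂ) : orbit G z 0 = z :=
  funext fun j => MvPolynomial.eval_X j

lemma orbit_succ (G : ℕ → Fin d → MvPolynomial (Fin d) ℂ) (z : Fin d → ℂ) (n : ℕ) :
    orbit G z (n + 1) = fun j => eval (orbit G z n) (G n j) := by
  funext j
  rw [orbit, compSeq]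
  exact eval₂Hom_bind₁ (RingHom.id ℂ) z (compSeq G n) (G n j)

lemma orbit_succ_eq_mulVec_add {L : ℕ → Matrix (Fin d) (Fin d) ℂ}
    {p G : ℕ → Fin d → MvPolynomial (Fin d) ℂ}
    (hG : G = fun n j => (∑ i : Fin d, C (L n j i) * X i) + p n j) (z : Fin d → ℂ) (n : ℕ) :
    orbit G z (n + 1) = L n *ᵥ orbit G z n + fun j => eval (orbit G z n) (p n j) := by
  rw [orbit_succ, hG]
  funext j
  simp [mulVec, dotProduct]

end Orbit

lemma norm_eval_le_of_coord_bound {d D k : ℕ} {M C lam t : ℝ} {q : MvPolynomial (Fin d) ℂ}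
    {j : Fin d} (hq : ∀ m ∈ q.support, (∀ i, j ≤ i → m i = 0) ∧ 2 ≤ m.sum fun _ e => e)
    (hdeg : q.totalDegree ≤ D) (hcoeff : ∀ m, ‖coeff m q‖ ≤ M) (hC : 1 ≤ C) (hlam0 : 0 ≤ lam)
    (hlam1 : lam ≤ 1) (ht : 0 ≤ t) (n : ℕ) {w : Fin d → ℂ}
    (hw : ∀ i < j, ‖w i‖ ≤ C * lam ^ n * weight k t) :
    ‖eval w q‖ ≤ (D + 1) ^ d * M * C ^ D * weight ((D + 1) * (k + 1)) t * lam ^ (2 * n) := by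
  have hM : 0 ≤ M := (norm_nonneg _).trans (hcoeff 0)
  calc ‖eval w q‖ ≤ (D + 1) ^ d * M * C ^ D * (lam ^ n) ^ 2 * weight (D * (k + 1)) t := by
        simpa using norm_eval_le_of_strictlyTriangular hq hdeg hcoeff hC (pow_nonneg hlam0 n)
          (pow_le_one₀ hlam0 hlam1) ht hw
    _ ≤ (D + 1) ^ d * M * C ^ D * weight ((D + 1) * (k + 1)) t * lam ^ (2 * n) := by
        rw [← pow_mul, mul_comm n 2, mul_right_comm]
        gcongr
        exact weight_mono ht (Nat.mul_le_mul_right _ (Nat.le_succ D))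

lemma exists_bound_of_coord_lt {d D : ℕ} {L : ℕ → Matrix (Fin d) (Fin d) ℂ} {c lam M : ℝ}
    {p : ℕ → Fin d → MvPolynomial (Fin d) ℂ} (hlam0 : 0 < lam) (hlam1 : lam < 1)
    (hL : ∀ n, (L n).BlockTriangular toDual)
    (hLnorm : ∀ m ℓ : ℕ, opN (Lprod L m ℓ) ≤ c * lam ^ ℓ)
    (hpstrict : ∀ n, ∀ j : Fin d, ∀ m ∈ (p n j).support,
      (∀ i : Fin d, j ≤ i → m i = 0) ∧ 2 ≤ m.sum (fun _ e => e))
    (hdeg : ∀ n j, (p n j).totalDegree ≤ D) (hcoeff : ∀ n j m, ‖coeff m (p n j)‖ ≤ M)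
    {F : (Fin d → ℂ) → ℕ → Fin d → ℂ} (hF0 : ∀ z, F z 0 = z)
    (hF : ∀ z n, F z (n + 1) = L n *ᵥ F z n + fun j => eval (F z n) (p n j)) (J : ℕ) :
    ∃ C k, 1 ≤ C ∧ ∀ z n (i : Fin d), (i : ℕ) < J → ‖F z n i‖ ≤ C * lam ^ n * weight k ‖z‖ := by
  induction J with
  | zero => exact ⟨1, 0, le_rfl, fun z n i hi => absurd hi (Nat.not_lt_zero _)⟩
  | succ J ih =>
    obtain ⟨C, k, hC, hJ⟩ := ih
    set K := (D + 1) ^ d * M * C ^ D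
    set k' := (D + 1) * (k + 1)
    have hforcing : ∀ z m (j : Fin d), (j : ℕ) ≤ J →
        ‖eval (F z m) (p m j)‖ ≤ K * weight k' ‖z‖ * lam ^ (2 * m) := fun z m j hj =>
      norm_eval_le_of_coord_bound (hpstrict m j) (hdeg m j) (hcoeff m j) hC hlam0.le
        hlam1.le (norm_nonneg z) m fun i hi => hJ z m i ((Fin.lt_def.1 hi).trans_le hj)
    refine ⟨max C (c + d * c * K / (lam * (1 - lam))), k', le_max_of_le_left hC,
      fun z n i hi => ?_⟩
    have hz := norm_nonneg z
    have hW := weight_nonneg (k := k') hz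
    rcases Nat.lt_succ_iff_lt_or_eq.1 hi with hi | hi
    · calc ‖F z n i‖ ≤ C * lam ^ n * weight k ‖z‖ := hJ z n i hi
        _ ≤ max C (c + d * c * K / (lam * (1 - lam))) * lam ^ n * weight k' ‖z‖ := by
            have := weight_nonneg (k := k) hz
            gcongr
            · exact le_max_left _ _
            · exact weight_mono hz (Nat.le_mul_of_pos_left _ D.succ_pos |>.trans' k.le_succ)
    · calc ‖F z n i‖
          ≤ (c * weight k' ‖z‖ + d * c * (K * weight k' ‖z‖) / (lam * (1 - lam))) * lam ^ n :=
            norm_apply_le_of_forcing hlam0 hlam1 hL hLnorm (hF z) (by rw [hF0]; exact le_weight hz)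
              (fun m j hj => hforcing z m j (hi ▸ Fin.le_def.1 hj)) n
        _ = (c + d * c * K / (lam * (1 - lam))) * lam ^ n * weight k' ‖z‖ := by ring
        _ ≤ max C (c + d * c * K / (lam * (1 - lam))) * lam ^ n * weight k' ‖z‖ := by
            gcongr; exact le_max_right _ _

theorem stmt17_general (d : ℕ) (L : ℕ → Matrix (Fin d) (Fin d) ℂ) (c lam : ℝ)
    (hlam0 : 0 < lam) (hlam1 : lam < 1)
    (hLtri : ∀ n, ∀ i j : Fin d, i < j → L n i j = 0)
    (hLnorm : ∀ m ℓ : ℕ, opN (Lprod L m ℓ) ≤ c * lam ^ ℓ)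
    (p : ℕ → Fin d → MvPolynomial (Fin d) ℂ)
    (hpstrict : ∀ n, ∀ j : Fin d, ∀ m ∈ (p n j).support,
      (∀ i : Fin d, j ≤ i → m i = 0) ∧ 2 ≤ m.sum (fun _ e => e))
    (hpbdd : ∃ (D : ℕ) (M : ℝ), ∀ n, ∀ j : Fin d,
      (p n j).totalDegree ≤ D ∧ ∀ m : Fin d →₀ ℕ, ‖MvPolynomial.coeff m (p n j)‖ ≤ M)
    (G : ℕ → Fin d → MvPolynomial (Fin d) ℂ)
    (hG : G = fun n j => (∑ i : Fin d, MvPolynomial.C (L n j i) * MvPolynomial.X i) + p n j) :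
    (∃ C : ℝ, 0 < C ∧ ∃ k : ℕ, ∀ n : ℕ, ∀ z : Fin d → ℂ,
      ‖(fun j => MvPolynomial.eval z (compSeq G n j) : Fin d → ℂ)‖
        ≤ C * lam ^ n * (‖z‖ + ‖z‖ ^ k)) ∧
    ∀ z : Fin d → ℂ,
      Filter.Tendsto (fun n => (fun j => MvPolynomial.eval z (compSeq G n j) : Fin d → ℂ))
        Filter.atTop (nhds 0) := by
  obtain ⟨D, M, hpDM⟩ := hpbdd
  obtain ⟨C, k, hC, hcoord⟩ := exists_bound_of_coord_lt hlam0 hlam1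
    (fun n _ _ h => hLtri n _ _ h) hLnorm hpstrict (fun n j => (hpDM n j).1)
    (fun n j => (hpDM n j).2) (orbit_zero G) (orbit_succ_eq_mulVec_add hG) d
  have hbound : ∀ n z, ‖orbit G z n‖ ≤ C * lam ^ n * (‖z‖ + ‖z‖ ^ (k + 1)) := fun n z =>
    (pi_norm_le_iff_of_nonneg (by positivity)).2 fun i =>
      (hcoord z n i i.isLt).trans (by gcongr; exact weight_le_add_pow (norm_nonneg z))
  refine ⟨⟨C, by linarith, k + 1, hbound⟩, fun z => ?_⟩
  have hgeom := (tendsto_pow_atTop_nhds_zero_of_lt_one hlam0.le hlam1).const_mul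
    (C * (‖z‖ + ‖z‖ ^ (k + 1)))
  rw [mul_zero] at hgeom
  exact squeeze_zero_norm (fun n => (hbound n z).trans_eq (by ring)) hgeom

theorem stmt17 (d : ℕ) (L : ℕ → Matrix (Fin d) (Fin d) ℂ) (c lam : ℝ)
    (hc : 0 < c) (hlam0 : 0 < lam) (hlam1 : lam < 1)
    (hLtri : ∀ n, ∀ i j : Fin d, i < j → L n i j = 0)
    (hLdiag : ∀ n, ∀ i : Fin d, L n i i ≠ 0)
    (hLnorm : ∀ m ℓ : ℕ, opN (Lprod L m ℓ) ≤ c * lam ^ ℓ)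
    (p : ℕ → Fin d → MvPolynomial (Fin d) ℂ)
    (hpstrict : ∀ n, ∀ j : Fin d, ∀ m ∈ (p n j).support,
      (∀ i : Fin d, j ≤ i → m i = 0) ∧ 2 ≤ m.sum (fun _ e => e))
    (hpbdd : ∃ (D : ℕ) (M : ℝ), ∀ n, ∀ j : Fin d,
      (p n j).totalDegree ≤ D ∧ ∀ m : Fin d →₀ ℕ, ‖MvPolynomial.coeff m (p n j)‖ ≤ M)
    (G : ℕ → Fin d → MvPolynomial (Fin d) ℂ)
    (hG : G = fun n j => (∑ i : Fin d, MvPolynomial.C (L n j i) * MvPolynomial.X i) + p n j) :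
    (∃ C : ℝ, 0 < C ∧ ∃ k : ℕ, ∀ n : ℕ, ∀ z : Fin d → ℂ,
      ‖(fun j => MvPolynomial.eval z (compSeq G n j) : Fin d → ℂ)‖
        ≤ C * lam ^ n * (‖z‖ + ‖z‖ ^ k)) ∧
    ∀ z : Fin d → ℂ,
      Filter.Tendsto (fun n => (fun j => MvPolynomial.eval z (compSeq G n j) : Fin d → ℂ))
        Filter.atTop (nhds 0) :=
  stmt17_general d L c lam hlam0 hlam1 hLtri hLnorm p hpstrict hpbdd G hG
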